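/- Define the Legendre functions L_a : ℝ → ℝ by the Rodrigues formula L_a(x) = (1/(2^a · a!)) · D^a[(t² − 1)^a](x), where D^a denotes the a-th iterated derivative. Then for every natural number a ≥ 1 and every x ∈ ℝ, the three-term recurrence holds: (a+1) · L_{a+1}(x) = (2a+1) · x · L_a(x) − a · L_{a−1}(x). -/

import Mathlib

/-!
Write `u n = (X² - 1) ^ n` and `D` for the derivative. Since `D (u (n + 1)) = 2 (n + 1) X u n`
and `X² u n = u (n + 1) + u n`, the polynomial `D^(n+2) (u (n + 2))` can be computed in two ways:
as `D^(n+1)` of `2 (n + 2) X u (n + 1)`, by Leibniz' rule, and as `D^n` of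
`D² (u (n + 2)) = 2 (n + 2) (2n + 3) u (n + 1) + 4 (n + 1) (n + 2) u n`.
Eliminating the common term `D^n (u (n + 1))` gives the recurrence.
-/

/-- The Legendre function given by Rodrigues' formula. -/
noncomputable def legendre (a : ℕ) (x : ℝ) : ℝ :=
  (1 / (2 ^ a * (Nat.factorial a : ℝ))) *
    iteratedDeriv a (fun t : ℝ => (t ^ 2 - 1) ^ a) x

open Polynomial

namespace Polynomial

theorem iteratedDeriv_eval {𝕜 : Type*} [NontriviallyNormedField 𝕜] (n : ℕ) (p : 𝕜[X]) :
    iteratedDeriv n (fun x => p.eval x) = fun x => (derivative^[n] p).eval x := by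
  induction n generalizing p with
  | zero => rfl
  | succ n ih =>
    have h : deriv (fun x => p.eval x) = fun x => (derivative p).eval x := by
      ext x; exact p.deriv
    rw [iteratedDeriv_succ', h, ih, Function.iterate_succ_apply]

variable {R : Type*} [CommRing R]

/-- `2 ^ n * n !` times the `n`-th Legendre polynomial. -/
noncomputable def rodrigues (n : ℕ) : R[X] :=
  derivative^[n] ((X ^ 2 - 1) ^ n)

theorem derivative_X_sq_sub_one_pow_succ (n : ℕ) :
    derivative ((X ^ 2 - 1 : R[X]) ^ (n + 1))
      = ((2 * (n + 1) : ℕ) : R[X]) * ((X ^ 2 - 1) ^ n * X) := by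
  rw [derivative_pow_succ, derivative_sub, derivative_X_sq, derivative_one]
  simp only [map_add, map_natCast, map_one, map_ofNat]
  push_cast
  ring

theorem derivative_two_X_sq_sub_one_pow_add_two (n : ℕ) :
    derivative^[2] ((X ^ 2 - 1 : R[X]) ^ (n + 2))
      = ((2 * (n + 2) * (2 * n + 3) : ℕ) : R[X]) * (X ^ 2 - 1) ^ (n + 1)
        + ((4 * (n + 1) * (n + 2) : ℕ) : R[X]) * (X ^ 2 - 1) ^ n := by
  rw [Function.iterate_succ_apply, Function.iterate_one, derivative_X_sq_sub_one_pow_succ,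
    derivative_natCast_mul, derivative_mul, derivative_X_sq_sub_one_pow_succ, derivative_X]
  push_cast
  ring

theorem rodrigues_add_two (n : ℕ) :
    rodrigues (n + 2)
      = ((2 * (n + 2) : ℕ) : R[X]) * (rodrigues (n + 1) * X
          + (n + 1 : ℕ) • derivative^[n] ((X ^ 2 - 1) ^ (n + 1))) := by
  rw [rodrigues, rodrigues, Function.iterate_succ_apply, derivative_X_sq_sub_one_pow_succ,
    iterate_derivative_natCast_mul, iterate_derivative_mul_X, Nat.add_sub_cancel]

theorem rodrigues_add_two' (n : ℕ) :
    rodrigues (n + 2)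
      = ((2 * (n + 2) * (2 * n + 3) : ℕ) : R[X]) * derivative^[n] ((X ^ 2 - 1) ^ (n + 1))
        + ((4 * (n + 1) * (n + 2) : ℕ) : R[X]) * rodrigues n := by
  rw [rodrigues, rodrigues, Function.iterate_add_apply, derivative_two_X_sq_sub_one_pow_add_two,
    iterate_map_add, iterate_derivative_natCast_mul, iterate_derivative_natCast_mul]

theorem natCast_mul_rodrigues_add_two (n : ℕ) :
    ((n : R[X]) + 2) * rodrigues (n + 2)
      = ((n : R[X]) + 2) * (2 * (2 * (n : R[X]) + 3) * X * rodrigues (n + 1)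
          - 4 * ((n : R[X]) + 1) ^ 2 * rodrigues n) := by
  have h₁ := rodrigues_add_two (R := R) n
  have h₂ := rodrigues_add_two' (R := R) n
  rw [nsmul_eq_mul] at h₁
  push_cast at h₁ h₂ ⊢
  linear_combination (2 * (n : R[X]) + 3) * h₁ - ((n : R[X]) + 1) * h₂

end Polynomial

theorem legendre_eq_eval_rodrigues (n : ℕ) (x : ℝ) :
    legendre n x = (rodrigues n).eval x / (2 ^ n * n.factorial) := by
  have h : (fun t : ℝ => (t ^ 2 - 1) ^ n) = fun t => ((X ^ 2 - 1 : ℝ[X]) ^ n).eval t := by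
    simp
  rw [legendre, h, iteratedDeriv_eval, rodrigues, one_div_mul_eq_div]

/-- The three-term recurrence for Legendre polynomials. -/
theorem legendre_recurrence (a : ℕ) (ha : 1 ≤ a) (x : ℝ) :
    ((a : ℝ) + 1) * legendre (a + 1) x
      = (2 * (a : ℝ) + 1) * x * legendre a x - (a : ℝ) * legendre (a - 1) x := by
  obtain ⟨n, rfl⟩ := Nat.exists_eq_add_of_le' ha
  have h := congrArg (eval x) (natCast_mul_rodrigues_add_two (R := ℝ) n)
  simp only [eval_mul, eval_sub, eval_add, eval_pow, eval_natCast, eval_X, eval_one,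
    eval_ofNat] at h
  rw [Nat.add_sub_cancel, legendre_eq_eval_rodrigues, legendre_eq_eval_rodrigues,
    legendre_eq_eval_rodrigues, Nat.factorial_succ (n + 1), Nat.factorial_succ n]
  push_cast at h ⊢
  linear_combination (norm := skip)
    h / (2 ^ (n + 2) * ((n : ℝ) + 2) * ((n : ℝ) + 1) * n.factorial)
  field_simp
  ring
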